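/- Let (c_k)_{k ∈ ℕ} be a countable family of real sequences c_k : ℕ → ℝ and let (A_k)_{k ∈ ℕ}, (B_k)_{k ∈ ℕ} be real numbers. Assume that for each k there exists a subset S_k ⊆ ℕ of natural density 1 such that for every ε > 0 the sets {j ∈ S_k : c_k(j) < A_k − ε} and {j ∈ S_k : c_k(j) > B_k + ε} are finite. Then there exists a single subset S ⊆ ℕ of natural density 1 such that for every k and every ε > 0 the sets {j ∈ S : c_k(j) < A_k − ε} and {j ∈ S : c_k(j) > B_k + ε} are finite; that is, A_k ≤ liminf_{j→∞, j∈S} c_k(j) ≤ limsup_{j→∞, j∈S} c_k(j) ≤ B_k for every k. -/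

import Mathlib

open scoped Classical

/-- A subset `S ⊆ ℕ` has natural density one if
`(1/n) · #(S ∩ {0,…,n-1}) → 1` as `n → ∞`. -/
def HasDensityOne (S : Set ℕ) : Prop :=
  Filter.Tendsto
    (fun n : ℕ => (((Finset.range n).filter (fun j => j ∈ S)).card : ℝ) / n)
    Filter.atTop (nhds 1)

/-!
Pass to complements: it suffices to find one density-zero set `Z'` almost containing each
member `Z k` of a countable family of density-zero sets. The accumulated unions
`W k = Z 0 ∪ … ∪ Z k` have density zero and increase; put `j ∈ Z'` iff `j ∈ W (m j)`, where
`m → ∞` slowly enough that the density ratio of `W (m n)` up to `n` still tends to zero.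
-/

open Filter Topology Finset

theorem exists_monotone_tendsto_diag {α : Type*} [PseudoMetricSpace α] {f : ℕ → ℕ → α} {a : α}
    (hf : ∀ k, Tendsto (f k) atTop (𝓝 a)) :
    ∃ m : ℕ → ℕ, Monotone m ∧ Tendsto m atTop atTop ∧
      Tendsto (fun n => f (m n) n) atTop (𝓝 a) := by
  have hev : ∀ k, ∀ᶠ n in atTop, dist (f k n) a < 1 / (k + 1 : ℝ) := fun k =>
    (hf k).eventually (Metric.ball_mem_nhds a Nat.one_div_pos_of_nat)
  choose N hN using fun k => eventually_atTop.mp (hev k)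
  set m : ℕ → ℕ := fun n => Nat.findGreatest (fun k => N k ≤ n) n
  have hm_mono : Monotone m := fun j n hjn =>
    Nat.findGreatest_mono (fun _ hk => hk.trans hjn) hjn
  have hm_ge : ∀ k n, k ≤ n → N k ≤ n → k ≤ m n := fun _ _ hk hNk => Nat.le_findGreatest hk hNk
  have hm_tendsto : Tendsto m atTop atTop := tendsto_atTop_atTop.mpr fun k =>
    ⟨max k (N k), fun n hn => hm_ge k n (le_of_max_le_left hn) (le_of_max_le_right hn)⟩
  refine ⟨m, hm_mono, hm_tendsto, ?_⟩
  have hdist : ∀ᶠ n in atTop, dist (f (m n) n) a ≤ 1 / (m n + 1 : ℝ) := by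
    filter_upwards [eventually_ge_atTop (N 0)] with n hn
    exact (hN _ n (Nat.findGreatest_spec (P := fun k => N k ≤ n) n.zero_le hn)).le
  exact tendsto_iff_dist_tendsto_zero.mpr <| squeeze_zero' (.of_forall fun _ => dist_nonneg)
    hdist (tendsto_one_div_add_atTop_nhds_zero_nat.comp hm_tendsto)

noncomputable def densityRatio (S : Set ℕ) (n : ℕ) : ℝ := (#{j ∈ range n | j ∈ S} : ℝ) / n

def HasDensityZero (Z : Set ℕ) : Prop := Tendsto (densityRatio Z) atTop (𝓝 0)

lemma densityRatio_nonneg (S : Set ℕ) (n : ℕ) : 0 ≤ densityRatio S n := by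
  unfold densityRatio; positivity

lemma densityRatio_le_of_forall_lt {X Y : Set ℕ} {n : ℕ} (h : ∀ j < n, j ∈ X → j ∈ Y) :
    densityRatio X n ≤ densityRatio Y n := by
  refine div_le_div_of_nonneg_right ?_ n.cast_nonneg
  refine Nat.cast_le.mpr (card_le_card fun j => ?_)
  simp only [mem_filter, mem_range]
  exact fun ⟨hj, hjX⟩ => ⟨hj, h j hj hjX⟩

lemma densityRatio_union_le (X Y : Set ℕ) (n : ℕ) :
    densityRatio (X ∪ Y) n ≤ densityRatio X n + densityRatio Y n := by
  unfold densityRatio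
  rw [← add_div]
  gcongr
  simp only [Set.mem_union, filter_or]
  exact_mod_cast card_union_le _ _

lemma densityRatio_compl (S : Set ℕ) {n : ℕ} (hn : n ≠ 0) :
    densityRatio Sᶜ n = 1 - densityRatio S n := by
  unfold densityRatio
  have hcard := card_filter_add_card_filter_not (s := range n) (· ∈ S)
  rw [card_range] at hcard
  simp only [Set.mem_compl_iff]
  rw [eq_sub_iff_add_eq, ← add_div, div_eq_one_iff_eq (by exact_mod_cast hn)]
  exact_mod_cast (add_comm _ _).trans hcard

lemma hasDensityOne_iff_hasDensityZero_compl (S : Set ℕ) :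
    HasDensityOne S ↔ HasDensityZero Sᶜ := by
  have hcompl : (fun n => 1 - densityRatio S n) =ᶠ[atTop] densityRatio Sᶜ := by
    filter_upwards [eventually_ne_atTop 0] with n hn
    exact (densityRatio_compl S hn).symm
  show Tendsto (densityRatio S) atTop (𝓝 1) ↔ _
  rw [HasDensityZero, ← tendsto_congr' hcompl]
  constructor
  · intro h
    simpa using (tendsto_const_nhds (x := (1 : ℝ))).sub h
  · intro h
    simpa using (tendsto_const_nhds (x := (1 : ℝ))).sub h

namespace HasDensityZero

lemma union {X Y : Set ℕ} (hX : HasDensityZero X) (hY : HasDensityZero Y) :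
    HasDensityZero (X ∪ Y) :=
  squeeze_zero (densityRatio_nonneg _) (densityRatio_union_le X Y) (by simpa using hX.add hY)

lemma accumulate {Z : ℕ → Set ℕ} (hZ : ∀ k, HasDensityZero (Z k)) (k : ℕ) :
    HasDensityZero (Set.accumulate Z k) := by
  induction k with
  | zero => simpa [Set.accumulate_zero_nat] using hZ 0
  | succ k ih => simpa [Set.accumulate_succ] using ih.union (hZ (k + 1))

end HasDensityZero

/-- The density-zero sets form a P-ideal. -/
theorem exists_hasDensityZero_forall_diff_finite {Z : ℕ → Set ℕ}
    (hZ : ∀ k, HasDensityZero (Z k)) :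
    ∃ Z' : Set ℕ, HasDensityZero Z' ∧ ∀ k, (Z k \ Z').Finite := by
  set W := Set.accumulate Z
  obtain ⟨m, hm_mono, hm_tendsto, hm_ratio⟩ :=
    exists_monotone_tendsto_diag fun k => HasDensityZero.accumulate hZ k
  refine ⟨{j | j ∈ W (m j)}, ?_, fun k => ?_⟩
  · refine squeeze_zero (densityRatio_nonneg _) (fun n => ?_) hm_ratio
    exact densityRatio_le_of_forall_lt fun j hj hjW =>
      Set.monotone_accumulate (hm_mono hj.le) hjW
  · have hfin : {j | m j < k}.Finite := by
      simpa [← Nat.cofinite_eq_atTop] using hm_tendsto.eventually_ge_atTop k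
    exact hfin.subset fun j ⟨hjZ, hjW⟩ => not_le.mp fun hk =>
      hjW (Set.monotone_accumulate hk (Set.subset_accumulate hjZ))

theorem exists_hasDensityOne_forall_diff_finite {S : ℕ → Set ℕ}
    (hS : ∀ k, HasDensityOne (S k)) :
    ∃ T : Set ℕ, HasDensityOne T ∧ ∀ k, (T \ S k).Finite := by
  simp only [hasDensityOne_iff_hasDensityZero_compl] at hS
  obtain ⟨Z, hZ, hfin⟩ := exists_hasDensityZero_forall_diff_finite hS
  refine ⟨Zᶜ, (hasDensityOne_iff_hasDensityZero_compl _).mpr (by rwa [compl_compl]), fun k => ?_⟩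
  simpa [Set.sdiff_eq, Set.inter_comm] using hfin k

lemma Set.Finite.sep_of_diff_finite {α : Type*} {T S : Set α} {p : α → Prop}
    (hTS : (T \ S).Finite) (hS : {j ∈ S | p j}.Finite) : {j ∈ T | p j}.Finite :=
  (hTS.union hS).subset fun j ⟨hjT, hj⟩ => by
    by_cases hjS : j ∈ S
    · exact Or.inr ⟨hjS, hj⟩
    · exact Or.inl ⟨hjT, hjS⟩

/-- Combining per-observable density-one subsets: if for each `k` there is a density-one
subset `S k` along which `A k ≤ liminf c k ≤ limsup c k ≤ B k`, then there is a single
density-one subset `S` along which these inequalities hold for every `k`. -/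
theorem combine_density_one_subsets (c : ℕ → ℕ → ℝ) (A B : ℕ → ℝ)
    (h : ∀ k : ℕ, ∃ Sk : Set ℕ, HasDensityOne Sk ∧
      ∀ ε : ℝ, 0 < ε →
        {j ∈ Sk | c k j < A k - ε}.Finite ∧ {j ∈ Sk | c k j > B k + ε}.Finite) :
    ∃ S : Set ℕ, HasDensityOne S ∧
      ∀ k : ℕ, ∀ ε : ℝ, 0 < ε →
        {j ∈ S | c k j < A k - ε}.Finite ∧ {j ∈ S | c k j > B k + ε}.Finite := by
  choose Sk hSk hfin using h
  obtain ⟨S, hS, hSSk⟩ := exists_hasDensityOne_forall_diff_finite hSk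
  exact ⟨S, hS, fun k ε hε =>
    ⟨(hSSk k).sep_of_diff_finite (hfin k ε hε).1, (hSSk k).sep_of_diff_finite (hfin k ε hε).2⟩⟩
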